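/- Let A, E ∈ ℝ^{m×n} with m ≥ n and rank(A) ≥ n−1. Let A = UΣV^T be a full singular value decomposition with Σ = [[Σ1, 0],[0, σ_min],[0, 0]], where Σ1 ∈ ℝ^{(n−1)×(n−1)} is nonsingular diagonal, and partition U^T E V = [[E11, e12],[e21^T, e22],[E31, e32]] commensurately. If 1/‖Σ1^{−1}‖₂ > 4‖E‖₂ and σ_min < ‖E‖₂, then σ_min(A+E)² ≥ ‖e32‖₂² + (σ_min + e22)² − r₃ − r₄, where w = (Σ1+E11)^{−T}[e21, E31^T]·[e22+σ_min; e32], r₃ = 2 e12^T w, and r₄ = ‖w‖₂² + 4‖E‖₂²·‖(Σ1+E11)^{−1}(e12+w)‖₂² / (1 − 4‖E‖₂²·‖(Σ1+E11)^{−1}‖₂²). -/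

import Mathlib

/-!
Conjugating by the orthogonal factors, `A + E` becomes the bordered matrix
`B = [[F, e12], [e21ᵀ, μ], [E31, e32]]` with `F = Σ1 + E11` and `μ = σ_min + e22`, and it suffices
to bound `‖B x‖²` from below for `x = (x₁, γ)`. Discarding the nonnegative terms
`(e21ᵀ x₁ + γ μ)²` and `‖E31 x₁‖²` and absorbing the cross terms through `Fᵀ w = μ e21 + E31ᵀ e32`
gives `‖B x‖² ≥ ‖F (x₁ + γ z)‖² + γ² (‖e32‖² + μ² - r₃ - ‖w‖²)` with `z = F⁻¹ (e12 + w)`.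
Since `‖Σ1 v‖ ≥ 4‖E‖‖v‖` and `‖E11‖ ≤ ‖E‖`, we get `‖F⁻¹‖ ≤ 1 / (3‖E‖)`, and the target bound is at
most `4‖E‖²`. Writing `x₁ = (x₁ + γ z) - γ z`, a weighted AM-GM inequality with weights
`4‖E‖²‖F⁻¹‖²` and `1 - 4‖E‖²‖F⁻¹‖²` then pays for the remaining `‖x₁‖²` term, at the price of
exactly the last summand of `r₄`.
-/

open Matrix

/-- Spectral (L2 operator) norm of a real matrix. -/
noncomputable def specNorm {ι κ : Type*} [Fintype ι] [Fintype κ] [DecidableEq κ]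
    (A : Matrix ι κ ℝ) : ℝ :=
  ‖LinearMap.toContinuousLinearMap
      (Matrix.toEuclideanLin A : EuclideanSpace ℝ κ →ₗ[ℝ] EuclideanSpace ℝ ι)‖

/-- Euclidean norm of a real vector. -/
noncomputable def enorm' {ι : Type*} [Fintype ι] (v : ι → ℝ) : ℝ :=
  Real.sqrt (∑ i, v i ^ 2)

/-- The `j`-th largest eigenvalue (1-indexed, non-increasing order), realized as the
`j`-th largest root (with multiplicity) of the characteristic polynomial. -/
noncomputable def eigvalDesc {ι : Type*} [Fintype ι] [DecidableEq ι]
    (A : Matrix ι ι ℝ) (j : ℕ) : ℝ :=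
  (A.charpoly.roots.sort (· ≤ ·)).getD (Fintype.card ι - j) 0

/-- The smallest eigenvalue. -/
noncomputable def lmin {ι : Type*} [Fintype ι] [DecidableEq ι] (A : Matrix ι ι ℝ) : ℝ :=
  eigvalDesc A (Fintype.card ι)

/-- The `j`-th largest singular value (1-indexed, non-increasing order). -/
noncomputable def singvalDesc {ι κ : Type*} [Fintype ι] [Fintype κ] [DecidableEq κ]
    (A : Matrix ι κ ℝ) (j : ℕ) : ℝ :=
  Real.sqrt (eigvalDesc (Aᵀ * A) j)

/-- The smallest singular value. -/
noncomputable def smin {ι κ : Type*} [Fintype ι] [Fintype κ] [DecidableEq κ]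
    (A : Matrix ι κ ℝ) : ℝ :=
  Real.sqrt (lmin (Aᵀ * A))

section EuclideanNorm
variable {ι κ : Type*} [Fintype ι] [Fintype κ]

lemma enorm'_eq_norm_toLp (v : ι → ℝ) : enorm' v = ‖WithLp.toLp 2 v‖ := by
  simp [enorm', EuclideanSpace.norm_eq]

lemma enorm'_nonneg (v : ι → ℝ) : 0 ≤ enorm' v := Real.sqrt_nonneg _

lemma enorm'_sq (v : ι → ℝ) : enorm' v ^ 2 = v ⬝ᵥ v := by
  rw [enorm', Real.sq_sqrt (by positivity)]
  simp [dotProduct, sq]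

lemma enorm'_eq_zero {v : ι → ℝ} : enorm' v = 0 ↔ v = 0 := by
  rw [enorm'_eq_norm_toLp, norm_eq_zero, WithLp.toLp_eq_zero]

lemma enorm'_le_enorm'_sub_add (v w : ι → ℝ) : enorm' v ≤ enorm' (v - w) + enorm' w := by
  simpa only [enorm'_eq_norm_toLp, WithLp.toLp_sub] using norm_le_norm_sub_add _ _

lemma enorm'_smul (c : ℝ) (v : ι → ℝ) : enorm' (c • v) = |c| * enorm' v := by
  rw [enorm'_eq_norm_toLp, WithLp.toLp_smul, norm_smul, Real.norm_eq_abs, enorm'_eq_norm_toLp]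

lemma enorm'_sumElim_sq (a : ι → ℝ) (b : κ → ℝ) :
    enorm' (Sum.elim a b) ^ 2 = enorm' a ^ 2 + enorm' b ^ 2 := by
  simp only [enorm'_sq, dotProduct, Fintype.sum_sum_type, Sum.elim_inl, Sum.elim_inr]

lemma enorm'_const_sq (a : ℝ) : enorm' (fun _ : Fin 1 => a) ^ 2 = a ^ 2 := by
  rw [enorm'_sq]
  simp [dotProduct, sq]

variable [DecidableEq κ]

lemma specNorm_nonneg (A : Matrix ι κ ℝ) : 0 ≤ specNorm A := norm_nonneg _

lemma enorm'_mulVec_le (A : Matrix ι κ ℝ) (v : κ → ℝ) :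
    enorm' (A *ᵥ v) ≤ specNorm A * enorm' v := by
  simpa [specNorm, enorm'_eq_norm_toLp, Matrix.toLpLin_toLp] using
    (LinearMap.toContinuousLinearMap (Matrix.toEuclideanLin A)).le_opNorm (WithLp.toLp 2 v)

lemma specNorm_le_of_forall {A : Matrix ι κ ℝ} {c : ℝ} (hc : 0 ≤ c)
    (h : ∀ v, enorm' (A *ᵥ v) ≤ c * enorm' v) : specNorm A ≤ c :=
  ContinuousLinearMap.opNorm_le_bound _ hc fun x => by
    simpa [enorm'_eq_norm_toLp, Matrix.toLpLin_apply] using h x.ofLp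

lemma enorm'_mulVec_of_transpose_mul_self {Q : Matrix ι κ ℝ} (hQ : Qᵀ * Q = 1)
    (v : κ → ℝ) : enorm' (Q *ᵥ v) = enorm' v := by
  refine (pow_left_inj₀ (enorm'_nonneg _) (enorm'_nonneg _) two_ne_zero).mp ?_
  rw [enorm'_sq, enorm'_sq, dotProduct_mulVec, ← vecMul_transpose, vecMul_vecMul, hQ, vecMul_one]

lemma enorm'_transpose_mul_mul_mulVec_le {ι' κ' : Type*} [Fintype ι'] [DecidableEq ι]
    [Fintype κ'] [DecidableEq κ']
    {U : Matrix ι ι' ℝ} {V : Matrix κ κ' ℝ} (hU : U * Uᵀ = 1) (hV : Vᵀ * V = 1)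
    (E : Matrix ι κ ℝ) (u : κ' → ℝ) :
    enorm' ((Uᵀ * E * V) *ᵥ u) ≤ specNorm E * enorm' u := by
  rw [← mulVec_mulVec, ← mulVec_mulVec,
    enorm'_mulVec_of_transpose_mul_self (by rwa [transpose_transpose]),
    ← enorm'_mulVec_of_transpose_mul_self hV u]
  exact enorm'_mulVec_le E _

end EuclideanNorm

lemma sub_mul_enorm'_le_add_mulVec {ι κ : Type*} [Fintype ι] [Fintype κ] {S E : Matrix ι κ ℝ}
    {a b : ℝ} (hS : ∀ v, a * enorm' v ≤ enorm' (S *ᵥ v))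
    (hE : ∀ v, enorm' (E *ᵥ v) ≤ b * enorm' v) (v : κ → ℝ) :
    (a - b) * enorm' v ≤ enorm' ((S + E) *ᵥ v) := by
  have := enorm'_le_enorm'_sub_add (S *ᵥ v) (-(E *ᵥ v))
  rw [sub_neg_eq_add, ← add_mulVec, ← neg_one_smul ℝ, enorm'_smul, abs_neg, abs_one,
    one_mul] at this
  linarith [hS v, hE v]

section Inverse
variable {n : Type*} [Fintype n] [DecidableEq n] {F : Matrix n n ℝ}

lemma enorm'_le_specNorm_inv_mul (hF : IsUnit F.det) (v : n → ℝ) :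
    enorm' v ≤ specNorm F⁻¹ * enorm' (F *ᵥ v) := by
  simpa [mulVec_mulVec, nonsing_inv_mul F hF] using enorm'_mulVec_le F⁻¹ (F *ᵥ v)

lemma one_div_specNorm_inv_mul_le (hF : IsUnit F.det) (v : n → ℝ) :
    1 / specNorm F⁻¹ * enorm' v ≤ enorm' (F *ᵥ v) := by
  rcases (specNorm_nonneg F⁻¹).eq_or_lt with h | h
  · simp [← h, enorm'_nonneg]
  · rw [one_div_mul_eq_div, div_le_iff₀ h, mul_comm]
    exact enorm'_le_specNorm_inv_mul hF v

lemma isUnit_det_of_forall_le {c : ℝ} (hc : 0 < c)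
    (h : ∀ v, c * enorm' v ≤ enorm' (F *ᵥ v)) : IsUnit F.det := by
  rw [isUnit_iff_ne_zero]
  intro hdet
  obtain ⟨v, hv, hFv⟩ := exists_mulVec_eq_zero_iff.mpr hdet
  have hv0 : enorm' v ≤ 0 := by
    have := h v
    rw [hFv, enorm'_eq_zero.mpr rfl] at this
    exact nonpos_of_mul_nonpos_right this hc
  exact hv (enorm'_eq_zero.mp (hv0.antisymm (enorm'_nonneg v)))

lemma specNorm_inv_le_of_forall {c : ℝ} (hc : 0 < c)
    (h : ∀ v, c * enorm' v ≤ enorm' (F *ᵥ v)) : specNorm F⁻¹ ≤ c⁻¹ :=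
  specNorm_le_of_forall (inv_nonneg.mpr hc.le) fun v => by
    have := h (F⁻¹ *ᵥ v)
    rw [mulVec_mulVec, mul_nonsing_inv F (isUnit_det_of_forall_le hc h), one_mulVec] at this
    rw [inv_mul_eq_div, le_div_iff₀ hc]
    linarith

lemma isUnit_det_add_and_mul_specNorm_inv_sq_lt_one {S E : Matrix n n ℝ} {ε : ℝ} (hε : 0 < ε)
    (hS : IsUnit S.det) (hSε : 1 / specNorm S⁻¹ > 4 * ε)
    (hE : ∀ v, enorm' (E *ᵥ v) ≤ ε * enorm' v) :
    IsUnit (S + E).det ∧ 4 * ε ^ 2 * specNorm (S + E)⁻¹ ^ 2 < 1 := by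
  have hSE : ∀ v, 3 * ε * enorm' v ≤ enorm' ((S + E) *ᵥ v) := fun v =>
    (mul_le_mul_of_nonneg_right (by linarith) (enorm'_nonneg v)).trans
      (sub_mul_enorm'_le_add_mulVec (one_div_specNorm_inv_mul_le hS) hE v)
  refine ⟨isUnit_det_of_forall_le (by positivity) hSE, ?_⟩
  have h3εν : 3 * ε * specNorm (S + E)⁻¹ ≤ 1 := by
    have := mul_le_mul_of_nonneg_left (specNorm_inv_le_of_forall (by positivity) hSE)
      (by positivity : 0 ≤ 3 * ε)
    rwa [mul_inv_cancel₀ (by positivity)] at this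
  nlinarith [pow_le_pow_left₀ (mul_nonneg (by positivity) (specNorm_nonneg _)) h3εν 2]

end Inverse

section SmallestSingularValue
variable {n : Type*} [Fintype n] [DecidableEq n]

lemma exists_lmin_eq_eigenvalues [Nonempty n] {M : Matrix n n ℝ} (hM : M.IsHermitian) :
    ∃ i, lmin M = hM.eigenvalues i := by
  have hlen : 0 < (M.charpoly.roots.sort (· ≤ ·)).length := by
    simp [hM.roots_charpoly_eq_eigenvalues, Fintype.card_pos]
  have hmem : lmin M ∈ M.charpoly.roots := by
    rw [lmin, eigvalDesc, Nat.sub_self, List.getD_eq_getElem _ _ hlen]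
    exact (Multiset.mem_sort _).mp (List.getElem_mem hlen)
  simpa [hM.roots_charpoly_eq_eigenvalues, eq_comm] using hmem

lemma le_lmin_of_forall [Nonempty n] {M : Matrix n n ℝ} (hM : M.IsHermitian) {t : ℝ}
    (h : ∀ v, t * (v ⬝ᵥ v) ≤ v ⬝ᵥ (M *ᵥ v)) : t ≤ lmin M := by
  obtain ⟨i, hi⟩ := exists_lmin_eq_eigenvalues hM
  have hv : ⇑(hM.eigenvectorBasis i) ⬝ᵥ ⇑(hM.eigenvectorBasis i) = 1 := by
    rw [← enorm'_sq, enorm'_eq_norm_toLp, WithLp.toLp_ofLp, hM.eigenvectorBasis.orthonormal.1 i,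
      one_pow]
  simpa [hM.mulVec_eigenvectorBasis, hv, hi] using h (hM.eigenvectorBasis i)

variable {ι : Type*} [Fintype ι]

lemma le_smin_sq_of_forall [Nonempty n] {A : Matrix ι n ℝ} {t : ℝ}
    (h : ∀ x, t * enorm' x ^ 2 ≤ enorm' (A *ᵥ x) ^ 2) : t ≤ smin A ^ 2 := by
  have hM : (Aᵀ * A).IsHermitian := by
    simpa using isHermitian_conjTranspose_mul_self A
  have key : ∀ s, (∀ x, s * enorm' x ^ 2 ≤ enorm' (A *ᵥ x) ^ 2) → s ≤ lmin (Aᵀ * A) :=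
    fun s hs => le_lmin_of_forall hM fun x => by
      simpa [enorm'_sq, ← mulVec_mulVec, dotProduct_mulVec, vecMul_transpose] using hs x
  rw [smin, Real.sq_sqrt (key 0 fun x => by simp [sq_nonneg])]
  exact key t h

lemma le_smin_mul_mul_transpose_sq_of_forall [Nonempty n] {ι' : Type*} [Fintype ι']
    [DecidableEq ι'] {U : Matrix ι ι' ℝ} {V : Matrix n n ℝ} {B : Matrix ι' n ℝ} {t : ℝ}
    (hU : Uᵀ * U = 1) (hV : V * Vᵀ = 1) (h : ∀ x, t * enorm' x ^ 2 ≤ enorm' (B *ᵥ x) ^ 2) :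
    t ≤ smin (U * B * Vᵀ) ^ 2 :=
  le_smin_sq_of_forall fun x => by
    rw [← mulVec_mulVec, ← mulVec_mulVec, enorm'_mulVec_of_transpose_mul_self hU,
      ← enorm'_mulVec_of_transpose_mul_self (Q := Vᵀ) (by rwa [transpose_transpose]) x]
    exact h _

end SmallestSingularValue

lemma mul_add_sq_le_of_mul_sq_lt_one {a ν s β : ℝ} (haν : a * ν ^ 2 < 1) :
    a * (ν * s + β) ^ 2 ≤ s ^ 2 + a * β ^ 2 / (1 - a * ν ^ 2) := by
  have hD : 0 < 1 - a * ν ^ 2 := sub_pos.mpr haν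
  have hgap : s ^ 2 + a * β ^ 2 / (1 - a * ν ^ 2) - a * (ν * s + β) ^ 2
      = ((1 - a * ν ^ 2) * s - a * ν * β) ^ 2 / (1 - a * ν ^ 2) := by
    field_simp
    ring
  rw [← sub_nonneg, hgap]
  positivity

lemma mul_enorm'_sq_le_enorm'_mulVec_add_sq {n : Type*} [Fintype n] {F : Matrix n n ℝ}
    {a ν T : ℝ} (ha : 0 ≤ a) (haν : a * ν ^ 2 < 1) (hT : T ≤ a)
    (hν : ∀ v, enorm' v ≤ ν * enorm' (F *ᵥ v)) (x z : n → ℝ) (γ : ℝ) :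
    T * enorm' x ^ 2
      ≤ enorm' (F *ᵥ (x + γ • z)) ^ 2 + γ ^ 2 * (a * enorm' z ^ 2 / (1 - a * ν ^ 2)) := by
  have hx : enorm' x ≤ ν * enorm' (F *ᵥ (x + γ • z)) + |γ| * enorm' z := by
    have := enorm'_le_enorm'_sub_add x ((-γ) • z)
    rw [enorm'_smul, abs_neg, neg_smul, sub_neg_eq_add] at this
    linarith [hν (x + γ • z)]
  calc T * enorm' x ^ 2 ≤ a * enorm' x ^ 2 := by gcongr
    _ ≤ a * (ν * enorm' (F *ᵥ (x + γ • z)) + |γ| * enorm' z) ^ 2 := by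
        gcongr
        exact enorm'_nonneg x
    _ ≤ _ := mul_add_sq_le_of_mul_sq_lt_one haν
    _ = _ := by rw [mul_pow, sq_abs]; ring

section Bordered
variable {n k : Type*}

/-- The bordered block matrix `[[F, b], [cᵀ, d], [G, g]]`. -/
def bordered (F : Matrix n n ℝ) (b c : n → ℝ) (d : ℝ) (G : Matrix k n ℝ) (g : k → ℝ) :
    Matrix (n ⊕ (Fin 1 ⊕ k)) (n ⊕ Fin 1) ℝ :=
  fromBlocks F (of fun i _ => b i) (of fun i j => Sum.elim (fun _ => c j) (fun l => G l j) i)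
    (of fun i _ => Sum.elim (fun _ => d) g i)

lemma bordered_add (F F' : Matrix n n ℝ) (b b' c c' : n → ℝ) (d d' : ℝ) (G G' : Matrix k n ℝ)
    (g g' : k → ℝ) :
    bordered F b c d G g + bordered F' b' c' d' G' g'
      = bordered (F + F') (b + b') (c + c') (d + d') (G + G') (g + g') := by
  rw [bordered, bordered, bordered, fromBlocks_add]
  congr 1 <;> ext (i | i) j <;> simp

lemma bordered_zero (F : Matrix n n ℝ) (d : ℝ) :
    bordered F 0 0 d (0 : Matrix k n ℝ) 0 =
      fromBlocks F 0 0 (of fun i (_ : Fin 1) => Sum.elim (fun _ => d) (fun _ => 0) i) := by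
  rw [bordered]
  congr 1; ext (i | i) j <;> simp

lemma bordered_mulVec [Fintype n] (F : Matrix n n ℝ) (b c : n → ℝ) (d : ℝ) (G : Matrix k n ℝ)
    (g : k → ℝ) (x : n → ℝ) (γ : ℝ) :
    bordered F b c d G g *ᵥ Sum.elim x (fun _ => γ)
      = Sum.elim (F *ᵥ x + γ • b) (Sum.elim (fun _ => c ⬝ᵥ x + γ * d) (G *ᵥ x + γ • g)) := by
  rw [bordered, fromBlocks_mulVec]
  ext (i | i | l) <;> simp [mulVec, dotProduct, mul_comm]

lemma enorm'_bordered_mulVec_sq [Fintype n] [Fintype k] (F : Matrix n n ℝ) (b c : n → ℝ) (d : ℝ)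
    (G : Matrix k n ℝ) (g : k → ℝ) (x : n → ℝ) (γ : ℝ) :
    enorm' (bordered F b c d G g *ᵥ Sum.elim x (fun _ => γ)) ^ 2
      = enorm' (F *ᵥ x + γ • b) ^ 2 + (c ⬝ᵥ x + γ * d) ^ 2 + enorm' (G *ᵥ x + γ • g) ^ 2 := by
  rw [bordered_mulVec, enorm'_sumElim_sq, enorm'_sumElim_sq, enorm'_const_sq, add_assoc]

lemma sumElim_comp_inl_const {β : Type*} (x : n ⊕ Fin 1 → β) :
    Sum.elim (x ∘ Sum.inl) (fun _ => x (Sum.inr 0)) = x := by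
  ext (i | i) <;> simp [Fin.fin_one_eq_zero]

variable [Fintype n] [Fintype k] {F : Matrix n n ℝ} {b c : n → ℝ} {d : ℝ} {G : Matrix k n ℝ}
  {g : k → ℝ}

lemma enorm'_mulVec_le_of_bordered {ε : ℝ}
    (hM : ∀ u, enorm' (bordered F b c d G g *ᵥ u) ≤ ε * enorm' u) (v : n → ℝ) :
    enorm' (F *ᵥ v) ≤ ε * enorm' v := by
  have hsq := enorm'_bordered_mulVec_sq F b c d G g v 0
  have hu : enorm' (Sum.elim v fun _ : Fin 1 => (0 : ℝ)) = enorm' v := by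
    refine (pow_left_inj₀ (enorm'_nonneg _) (enorm'_nonneg _) two_ne_zero).mp ?_
    rw [enorm'_sumElim_sq, enorm'_const_sq]
    ring
  simp only [zero_smul, add_zero, zero_mul] at hsq
  calc enorm' (F *ᵥ v) ≤ enorm' (bordered F b c d G g *ᵥ Sum.elim v fun _ => 0) :=
        (pow_le_pow_iff_left₀ (enorm'_nonneg _) (enorm'_nonneg _) two_ne_zero).mp
          (by rw [hsq, add_assoc]; exact le_add_of_nonneg_right (by positivity))
    _ ≤ ε * enorm' v := hu ▸ hM _

lemma bordered_lastCol_sq_le {ε : ℝ}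
    (hM : ∀ u, enorm' (bordered F b c d G g *ᵥ u) ≤ ε * enorm' u) :
    enorm' b ^ 2 + d ^ 2 + enorm' g ^ 2 ≤ ε ^ 2 := by
  have hsq := enorm'_bordered_mulVec_sq F b c d G g 0 1
  have hu : enorm' (Sum.elim (0 : n → ℝ) fun _ : Fin 1 => (1 : ℝ)) = 1 := by
    refine (pow_left_inj₀ (enorm'_nonneg _) zero_le_one two_ne_zero).mp ?_
    rw [enorm'_sumElim_sq, enorm'_const_sq, enorm'_sq]
    simp
  simp only [mulVec_zero, dotProduct_zero, one_smul, one_mul, zero_add] at hsq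
  have h := hM (Sum.elim 0 fun _ => 1)
  rw [hu, mul_one] at h
  rw [← hsq]
  exact pow_le_pow_left₀ (enorm'_nonneg _) h 2

lemma enorm'_sq_add_le_bordered {w z : n → ℝ} (hw : Fᵀ *ᵥ w = d • c + Gᵀ *ᵥ g)
    (hz : F *ᵥ z = b + w) (x : n → ℝ) (γ : ℝ) :
    enorm' (F *ᵥ (x + γ • z)) ^ 2 + γ ^ 2 * (enorm' g ^ 2 + d ^ 2 - 2 * (b ⬝ᵥ w) - enorm' w ^ 2)
      ≤ enorm' (bordered F b c d G g *ᵥ Sum.elim x (fun _ => γ)) ^ 2 := by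
  have hwF : w ⬝ᵥ (F *ᵥ x) = d * (c ⬝ᵥ x) + g ⬝ᵥ (G *ᵥ x) := by
    rw [dotProduct_mulVec, ← mulVec_transpose, hw, add_dotProduct, smul_dotProduct, smul_eq_mul,
      mulVec_transpose, ← dotProduct_mulVec]
  have hGx : 0 ≤ (G *ᵥ x) ⬝ᵥ (G *ᵥ x) := by
    rw [← enorm'_sq]
    positivity
  rw [enorm'_bordered_mulVec_sq, mulVec_add, mulVec_smul, hz]
  simp only [enorm'_sq, add_dotProduct, dotProduct_add, smul_dotProduct, dotProduct_smul,
    smul_eq_mul, dotProduct_comm _ (F *ᵥ x), dotProduct_comm g, dotProduct_comm w b] at hwF ⊢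
  linear_combination (2 * γ) * hwF + sq_nonneg (c ⬝ᵥ x) + hGx

lemma mul_enorm'_sq_le_bordered {a ν : ℝ} {w z : n → ℝ} (ha : 0 ≤ a) (haν : a * ν ^ 2 < 1)
    (hν : ∀ v, enorm' v ≤ ν * enorm' (F *ᵥ v)) (hcol : enorm' b ^ 2 + d ^ 2 + enorm' g ^ 2 ≤ a)
    (hw : Fᵀ *ᵥ w = d • c + Gᵀ *ᵥ g) (hz : F *ᵥ z = b + w) (x : n ⊕ Fin 1 → ℝ) :
    (enorm' g ^ 2 + d ^ 2 - 2 * (b ⬝ᵥ w) - (enorm' w ^ 2 + a * enorm' z ^ 2 / (1 - a * ν ^ 2)))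
        * enorm' x ^ 2
      ≤ enorm' (bordered F b c d G g *ᵥ x) ^ 2 := by
  have hbw : 0 ≤ enorm' b ^ 2 + 2 * (b ⬝ᵥ w) + enorm' w ^ 2 := by
    have := enorm'_sq (b + w)
    simp only [add_dotProduct, dotProduct_add, dotProduct_comm w b, ← enorm'_sq] at this
    nlinarith [sq_nonneg (enorm' (b + w))]
  have hzD : 0 ≤ a * enorm' z ^ 2 / (1 - a * ν ^ 2) := by
    have := sub_pos.mpr haν
    positivity
  have hT := mul_enorm'_sq_le_enorm'_mulVec_add_sq (T := enorm' g ^ 2 + d ^ 2 - 2 * (b ⬝ᵥ w) -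
    (enorm' w ^ 2 + a * enorm' z ^ 2 / (1 - a * ν ^ 2))) ha haν (by linarith) hν
    (x ∘ Sum.inl) z (x (Sum.inr 0))
  have hB := enorm'_sq_add_le_bordered (c := c) (G := G) hw hz (x ∘ Sum.inl) (x (Sum.inr 0))
  rw [← sumElim_comp_inl_const x, enorm'_sumElim_sq, enorm'_const_sq]
  linear_combination hT + hB

end Bordered

theorem stmt10_general (p q : ℕ)
    (A E : Matrix (Fin p ⊕ (Fin 1 ⊕ Fin q)) (Fin p ⊕ Fin 1) ℝ)
    (U : Matrix (Fin p ⊕ (Fin 1 ⊕ Fin q)) (Fin p ⊕ (Fin 1 ⊕ Fin q)) ℝ)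
    (V : Matrix (Fin p ⊕ Fin 1) (Fin p ⊕ Fin 1) ℝ)
    (S1 E11 : Matrix (Fin p) (Fin p) ℝ) (e12 e21 : Fin p → ℝ) (e22 : ℝ)
    (E31 : Matrix (Fin q) (Fin p) ℝ) (e32 : Fin q → ℝ) (σm : ℝ)
    (hU : Uᵀ * U = 1) (hV : Vᵀ * V = 1)
    (hS1det : S1.det ≠ 0) (hσm : 0 ≤ σm)
    (hA : A = (U * (Matrix.fromBlocks S1 0 0
      (Matrix.of fun i (_ : Fin 1) => Sum.elim (fun (_ : Fin 1) => σm) (fun _ => (0 : ℝ)) i) :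
        Matrix (Fin p ⊕ (Fin 1 ⊕ Fin q)) (Fin p ⊕ Fin 1) ℝ) :
        Matrix (Fin p ⊕ (Fin 1 ⊕ Fin q)) (Fin p ⊕ Fin 1) ℝ) * Vᵀ)
    (hE : Uᵀ * E * V = Matrix.fromBlocks E11 (Matrix.of fun i (_ : Fin 1) => e12 i)
      (Matrix.of fun i j => Sum.elim (fun (_ : Fin 1) => e21 j) (fun iq => E31 iq j) i)
      (Matrix.of fun i (_ : Fin 1) => Sum.elim (fun (_ : Fin 1) => e22) (fun iq => e32 iq) i))
    (h1 : 1 / specNorm S1⁻¹ > 4 * specNorm E) (h2 : σm < specNorm E) :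
    ∀ w : Fin p → ℝ,
      w = ((S1 + E11)ᵀ)⁻¹ *ᵥ ((e22 + σm) • e21 + E31ᵀ *ᵥ e32) →
    ∀ r3 : ℝ, r3 = 2 * (e12 ⬝ᵥ w) →
    ∀ r4 : ℝ, r4 = enorm' w ^ 2
        + 4 * specNorm E ^ 2 * enorm' ((S1 + E11)⁻¹ *ᵥ (e12 + w)) ^ 2
          / (1 - 4 * specNorm E ^ 2 * specNorm (S1 + E11)⁻¹ ^ 2) →
    smin (A + E) ^ 2 ≥ enorm' e32 ^ 2 + (σm + e22) ^ 2 - r3 - r4 := by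
  intro w hw r3 hr3 r4 hr4
  subst hr3 hr4
  set ε := specNorm E
  set F := S1 + E11
  have hε : 0 < ε := hσm.trans_lt h2
  have hUt : U * Uᵀ = 1 := mul_eq_one_comm.mp hU
  have hVt : V * Vᵀ = 1 := mul_eq_one_comm.mp hV
  have hE' : Uᵀ * E * V = bordered E11 e12 e21 e22 E31 e32 := hE
  have hM : ∀ u, enorm' (bordered E11 e12 e21 e22 E31 e32 *ᵥ u) ≤ ε * enorm' u :=
    hE' ▸ enorm'_transpose_mul_mul_mulVec_le hUt hV E
  obtain ⟨hFdet, haν⟩ := isUnit_det_add_and_mul_specNorm_inv_sq_lt_one hε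
    (isUnit_iff_ne_zero.mpr hS1det) h1 (enorm'_mulVec_le_of_bordered hM)
  have hcol : enorm' e12 ^ 2 + (σm + e22) ^ 2 + enorm' e32 ^ 2 ≤ 4 * ε ^ 2 := by
    nlinarith [bordered_lastCol_sq_le hM, pow_le_pow_left₀ hσm h2.le 2, sq_nonneg (σm - e22),
      sq_nonneg (enorm' e12), sq_nonneg (enorm' e32)]
  have hw' : Fᵀ *ᵥ w = (σm + e22) • e21 + E31ᵀ *ᵥ e32 := by
    rw [hw, mulVec_mulVec, mul_nonsing_inv _ (by rwa [det_transpose]), one_mulVec, add_comm σm]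
  have hz : F *ᵥ (F⁻¹ *ᵥ (e12 + w)) = e12 + w := by
    rw [mulVec_mulVec, mul_nonsing_inv _ hFdet, one_mulVec]
  have hAE : A + E = U * bordered F e12 e21 (σm + e22) E31 e32 * Vᵀ := by
    have hEU : E = U * bordered E11 e12 e21 e22 E31 e32 * Vᵀ := by
      rw [← hE', ← Matrix.mul_assoc, ← Matrix.mul_assoc, hUt, Matrix.one_mul, Matrix.mul_assoc,
        hVt, Matrix.mul_one]
    rw [hA, ← bordered_zero (k := Fin q), hEU, ← Matrix.add_mul, ← Matrix.mul_add, bordered_add]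
    simp only [zero_add, F]
  rw [hAE]
  exact le_smin_mul_mul_transpose_sq_of_forall hU hVt <|
    mul_enorm'_sq_le_bordered (by positivity) haν (enorm'_le_specNorm_inv_mul hFdet) hcol hw' hz

theorem stmt10 (p q : ℕ)
    (A E : Matrix (Fin p ⊕ (Fin 1 ⊕ Fin q)) (Fin p ⊕ Fin 1) ℝ)
    (U : Matrix (Fin p ⊕ (Fin 1 ⊕ Fin q)) (Fin p ⊕ (Fin 1 ⊕ Fin q)) ℝ)
    (V : Matrix (Fin p ⊕ Fin 1) (Fin p ⊕ Fin 1) ℝ)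
    (S1 E11 : Matrix (Fin p) (Fin p) ℝ) (e12 e21 : Fin p → ℝ) (e22 : ℝ)
    (E31 : Matrix (Fin q) (Fin p) ℝ) (e32 : Fin q → ℝ) (σm : ℝ)
    (hU : Uᵀ * U = 1) (hV : Vᵀ * V = 1)
    (hS1 : S1.IsDiag) (hS1det : S1.det ≠ 0) (hσm : 0 ≤ σm)
    (hA : A = (U * (Matrix.fromBlocks S1 0 0
      (Matrix.of fun i (_ : Fin 1) => Sum.elim (fun (_ : Fin 1) => σm) (fun _ => (0 : ℝ)) i) :
        Matrix (Fin p ⊕ (Fin 1 ⊕ Fin q)) (Fin p ⊕ Fin 1) ℝ) :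
        Matrix (Fin p ⊕ (Fin 1 ⊕ Fin q)) (Fin p ⊕ Fin 1) ℝ) * Vᵀ)
    (hrank : p ≤ A.rank)
    (hE : Uᵀ * E * V = Matrix.fromBlocks E11 (Matrix.of fun i (_ : Fin 1) => e12 i)
      (Matrix.of fun i j => Sum.elim (fun (_ : Fin 1) => e21 j) (fun iq => E31 iq j) i)
      (Matrix.of fun i (_ : Fin 1) => Sum.elim (fun (_ : Fin 1) => e22) (fun iq => e32 iq) i))
    (h1 : 1 / specNorm S1⁻¹ > 4 * specNorm E) (h2 : σm < specNorm E) :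
    ∀ w : Fin p → ℝ,
      w = ((S1 + E11)ᵀ)⁻¹ *ᵥ ((e22 + σm) • e21 + E31ᵀ *ᵥ e32) →
    ∀ r3 : ℝ, r3 = 2 * (e12 ⬝ᵥ w) →
    ∀ r4 : ℝ, r4 = enorm' w ^ 2
        + 4 * specNorm E ^ 2 * enorm' ((S1 + E11)⁻¹ *ᵥ (e12 + w)) ^ 2
          / (1 - 4 * specNorm E ^ 2 * specNorm (S1 + E11)⁻¹ ^ 2) →
    smin (A + E) ^ 2 ≥ enorm' e32 ^ 2 + (σm + e22) ^ 2 - r3 - r4 :=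
  stmt10_general p q A E U V S1 E11 e12 e21 e22 E31 e32 σm hU hV hS1det hσm hA hE h1 h2
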